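/- arXiv:2112.12201 — 2 statements merged into one kernel-verified Lean document; each statement's English description precedes it below -/
import Mathlib

section
/- Let X be a natural-number-valued random variable with finite mean, μ > 0, and suppose D(t,μ) = Ψ_X'(t) − μΨ_X(t) does not change sign on [0,1] (either D(t,μ) ≥ 0 for all t ∈ [0,1] or D(t,μ) ≤ 0 for all t ∈ [0,1]). Then |e^{−μ} − P(X=0)| ≤ ∫_0^1 |D(t,μ)| dt ≤ e^{μ} |e^{−μ} − P(X=0)|. -/
/-! Multiplying by the integrating factor `e^{-μt}` gives `(Ψ_X(t) e^{-μt})' = D(t,μ) e^{-μt}`,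
so `∫₀¹ D(t,μ) e^{-μt} dt = e^{-μ} - P(X=0)`. As `D` has constant sign this integral, in absolute
value, is `∫₀¹ |D| e^{-μt} dt`, which lies between `e^{-μ} ∫₀¹ |D|` and `∫₀¹ |D|`. -/

open Real

open Set intervalIntegral
open MeasureTheory (volume)

section WeightedIntegral

variable {f w : ℝ → ℝ} {a b : ℝ}

theorem integral_mul_le_mul_integral_of_le {M : ℝ} (hab : a ≤ b) (hf : ∀ t ∈ Ioo a b, 0 ≤ f t)
    (hw : ∀ t ∈ Ioo a b, w t ≤ M) (hfi : IntervalIntegrable f volume a b)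
    (hfwi : IntervalIntegrable (fun t => f t * w t) volume a b) :
    ∫ t in a..b, f t * w t ≤ M * ∫ t in a..b, f t := by
  rw [← integral_const_mul]
  refine integral_mono_on_of_le_Ioo hab hfwi (hfi.const_mul M) fun t ht => ?_
  rw [mul_comm M]
  exact mul_le_mul_of_nonneg_left (hw t ht) (hf t ht)

theorem mul_integral_le_integral_mul_of_le {m : ℝ} (hab : a ≤ b) (hf : ∀ t ∈ Ioo a b, 0 ≤ f t)
    (hw : ∀ t ∈ Ioo a b, m ≤ w t) (hfi : IntervalIntegrable f volume a b)
    (hfwi : IntervalIntegrable (fun t => f t * w t) volume a b) :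
    m * ∫ t in a..b, f t ≤ ∫ t in a..b, f t * w t := by
  rw [← integral_const_mul]
  refine integral_mono_on_of_le_Ioo hab (hfi.const_mul m) hfwi fun t ht => ?_
  rw [mul_comm m]
  exact mul_le_mul_of_nonneg_left (hw t ht) (hf t ht)

theorem abs_integral_eq_integral_abs_of_nonneg_or_nonpos (hab : a ≤ b)
    (hf : (∀ t ∈ Ioo a b, 0 ≤ f t) ∨ (∀ t ∈ Ioo a b, f t ≤ 0)) :
    |∫ t in a..b, f t| = ∫ t in a..b, |f t| := by
  have habs_nonneg : 0 ≤ ∫ t in a..b, |f t| := integral_nonneg_of_forall hab fun t => abs_nonneg _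
  rcases hf with hf | hf
  · rw [integral_congr_Ioo_of_le hab fun t ht => (abs_of_nonneg (hf t ht)).symm,
      abs_of_nonneg habs_nonneg]
  · rw [integral_congr_Ioo_of_le hab fun t ht =>
      neg_eq_iff_eq_neg.mp (abs_of_nonpos (hf t ht)).symm,
      integral_neg, abs_neg, abs_of_nonneg habs_nonneg]

end WeightedIntegral

theorem abs_integral_mul_exp_neg_bounds {f : ℝ → ℝ} {μ : ℝ} (hμ : 0 ≤ μ)
    (hfi : IntervalIntegrable f volume 0 1)
    (hf : (∀ t ∈ Ioo (0 : ℝ) 1, 0 ≤ f t) ∨ (∀ t ∈ Ioo (0 : ℝ) 1, f t ≤ 0)) :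
    |∫ t in (0 : ℝ)..1, f t * exp (-μ * t)| ≤ ∫ t in (0 : ℝ)..1, |f t| ∧
      ∫ t in (0 : ℝ)..1, |f t| ≤ exp μ * |∫ t in (0 : ℝ)..1, f t * exp (-μ * t)| := by
  have hexp : ContinuousOn (fun t : ℝ => exp (-μ * t)) (uIcc 0 1) := by fun_prop
  have hsign : (∀ t ∈ Ioo (0 : ℝ) 1, 0 ≤ f t * exp (-μ * t)) ∨
      (∀ t ∈ Ioo (0 : ℝ) 1, f t * exp (-μ * t) ≤ 0) := by
    refine hf.imp (fun h t ht => ?_) (fun h t ht => ?_)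
    · exact mul_nonneg (h t ht) (exp_pos _).le
    · exact mul_nonpos_of_nonpos_of_nonneg (h t ht) (exp_pos _).le
  have hweight : |∫ t in (0 : ℝ)..1, f t * exp (-μ * t)| =
      ∫ t in (0 : ℝ)..1, |f t| * exp (-μ * t) := by
    simp_rw [abs_integral_eq_integral_abs_of_nonneg_or_nonpos zero_le_one hsign, abs_mul,
      abs_exp]
  have hfwi := hfi.abs.mul_continuousOn hexp
  rw [hweight]
  constructor
  · calc ∫ t in (0 : ℝ)..1, |f t| * exp (-μ * t) ≤ 1 * ∫ t in (0 : ℝ)..1, |f t| :=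
          integral_mul_le_mul_integral_of_le zero_le_one (fun t _ => abs_nonneg _)
            (fun t ht => exp_le_one_iff.mpr (by nlinarith [ht.1])) hfi.abs hfwi
      _ = _ := one_mul _
  · calc ∫ t in (0 : ℝ)..1, |f t| = exp μ * (exp (-μ) * ∫ t in (0 : ℝ)..1, |f t|) := by
          rw [← mul_assoc, ← exp_add, add_neg_cancel, exp_zero, one_mul]
      _ ≤ exp μ * ∫ t in (0 : ℝ)..1, |f t| * exp (-μ * t) := by
          gcongr
          exact mul_integral_le_integral_mul_of_le zero_le_one (fun t _ => abs_nonneg _)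
            (fun t ht => exp_le_exp.mpr (by nlinarith [ht.1, ht.2])) hfi.abs hfwi

theorem integral_sub_mul_mul_exp_neg_of_hasDerivAt {F F' : ℝ → ℝ} {a b : ℝ} (μ : ℝ) (hab : a ≤ b)
    (hF : ContinuousOn F (Icc a b)) (hderiv : ∀ t ∈ Ioo a b, HasDerivAt F (F' t) t)
    (hF' : IntervalIntegrable F' volume a b) :
    ∫ t in a..b, (F' t - μ * F t) * exp (-μ * t) =
      F b * exp (-μ * b) - F a * exp (-μ * a) := by
  have hexp : Continuous fun t : ℝ => exp (-μ * t) := by fun_prop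
  have hexp' (t : ℝ) : HasDerivAt (fun t => exp (-μ * t)) (exp (-μ * t) * -μ) t := by
    simpa using ((hasDerivAt_id t).const_mul (-μ)).exp
  have hFi : IntervalIntegrable F volume a b := hF.intervalIntegrable_of_Icc hab
  exact integral_eq_sub_of_hasDerivAt_of_le hab (hF.mul hexp.continuousOn)
    (fun t ht => ((hderiv t ht).mul (hexp' t)).congr_deriv (by ring))
    ((hF'.sub (hFi.const_mul μ)).mul_continuousOn hexp.continuousOn)

noncomputable def pgf (p : ℕ → ℝ) (t : ℝ) : ℝ := ∑' j, p j * t ^ j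

/-- The `j = 0` term has coefficient `0`, so the truncated exponent `j - 1` is harmless. -/
noncomputable def pgfDeriv (p : ℕ → ℝ) (t : ℝ) : ℝ := ∑' j, j * p j * t ^ (j - 1)

theorem continuousOn_tsum_mul_pow {c : ℕ → ℝ} (hc : Summable c) (k : ℕ → ℕ) :
    ContinuousOn (fun t => ∑' j, c j * t ^ k j) (Icc (-1) 1) := by
  refine continuousOn_tsum (fun j => by fun_prop) hc.abs fun j t ht => ?_
  rw [norm_mul, norm_pow, Real.norm_eq_abs]
  exact mul_le_of_le_one_right (abs_nonneg _) (pow_le_one₀ (abs_nonneg t) (abs_le.mpr ht))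

theorem pgf_zero (p : ℕ → ℝ) : pgf p 0 = p 0 := by
  rw [pgf, tsum_eq_single 0 fun j hj => by simp [zero_pow hj]]
  simp

theorem pgf_one (p : ℕ → ℝ) : pgf p 1 = ∑' j, p j := by
  simp [pgf]

theorem hasDerivAt_pgf {p : ℕ → ℝ} (hmean : Summable fun j : ℕ => (j : ℝ) * p j) {t : ℝ}
    (ht : t ∈ Ioo (-1) 1) : HasDerivAt (pgf p) (pgfDeriv p t) t := by
  unfold pgf pgfDeriv
  refine hasDerivAt_tsum_of_isPreconnected (g := fun j s => p j * s ^ j)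
    (g' := fun j s => j * p j * s ^ (j - 1)) hmean.abs isOpen_Ioo isPreconnected_Ioo
    (fun j s _ => ?_) (fun j s hs => ?_) (show (0 : ℝ) ∈ Ioo (-1) 1 by norm_num) ?_ ht
  · exact ((hasDerivAt_pow j s).const_mul (p j)).congr_deriv (by ring)
  · rw [norm_mul, norm_pow, Real.norm_eq_abs]
    exact mul_le_of_le_one_right (abs_nonneg _)
      (pow_le_one₀ (abs_nonneg s) (abs_lt.mpr hs).le)
  · exact summable_of_ne_finset_zero (s := {0}) fun j hj => by simp_all

theorem continuousOn_pgf {p : ℕ → ℝ} (hp : Summable p) : ContinuousOn (pgf p) (Icc (-1) 1) :=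
  continuousOn_tsum_mul_pow hp id

theorem continuousOn_pgfDeriv {p : ℕ → ℝ} (hmean : Summable fun j : ℕ => (j : ℝ) * p j) :
    ContinuousOn (pgfDeriv p) (Icc (-1) 1) :=
  continuousOn_tsum_mul_pow hmean (· - 1)

theorem D_abs_integral_bounds_general (p : ℕ → ℝ)
    (hsum : ∑' j, p j = 1) (hmean : Summable (fun j : ℕ => (j : ℝ) * p j))
    (μ : ℝ) (hμ : 0 < μ)
    (D : ℝ → ℝ)
    (hD : D = fun t => deriv (fun s : ℝ => ∑' j : ℕ, p j * s ^ j) t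
      - μ * ∑' j : ℕ, p j * t ^ j)
    (hsign : (∀ t ∈ Set.Icc (0 : ℝ) 1, 0 ≤ D t) ∨ (∀ t ∈ Set.Icc (0 : ℝ) 1, D t ≤ 0)) :
    |Real.exp (-μ) - p 0| ≤ ∫ t in (0 : ℝ)..1, |D t| ∧
      ∫ t in (0 : ℝ)..1, |D t| ≤ Real.exp μ * |Real.exp (-μ) - p 0| := by
  have hp : Summable p := by
    by_contra h
    simp [tsum_eq_zero_of_not_summable h] at hsum
  have hIcc : Icc (0 : ℝ) 1 ⊆ Icc (-1) 1 := Icc_subset_Icc_left (by norm_num)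
  have hIoo : Ioo (0 : ℝ) 1 ⊆ Ioo (-1) 1 := Ioo_subset_Ioo_left (by norm_num)
  have hderiv (t : ℝ) (ht : t ∈ Ioo 0 1) : HasDerivAt (pgf p) (pgfDeriv p t) t :=
    hasDerivAt_pgf hmean (hIoo ht)
  -- `Ψ` is only known to be differentiable on `(-1, 1)`, so `D 1` may be a junk value.
  have hDeq : EqOn D (fun t => pgfDeriv p t - μ * pgf p t) (Ioo 0 1) := fun t ht => by
    rw [hD]
    exact congrArg (· - _) (hderiv t ht).deriv
  have hcont : ContinuousOn (fun t => pgfDeriv p t - μ * pgf p t) (Icc 0 1) :=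
    ((continuousOn_pgfDeriv hmean).sub (continuousOn_const.mul (continuousOn_pgf hp))).mono hIcc
  have hDi : IntervalIntegrable D volume 0 1 :=
    (hcont.intervalIntegrable_of_Icc zero_le_one).congr_uIoo
      (by simpa only [uIoo_of_le zero_le_one] using hDeq.symm)
  have hidentity : ∫ t in (0 : ℝ)..1, D t * exp (-μ * t) = exp (-μ) - p 0 := by
    rw [integral_congr_Ioo_of_le zero_le_one fun t ht => by rw [hDeq ht],
      integral_sub_mul_mul_exp_neg_of_hasDerivAt μ zero_le_one ((continuousOn_pgf hp).mono hIcc)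
        hderiv
        (((continuousOn_pgfDeriv hmean).mono hIcc).intervalIntegrable_of_Icc zero_le_one),
      pgf_one, hsum, pgf_zero]
    simp
  rw [← hidentity]
  exact abs_integral_mul_exp_neg_bounds hμ.le hDi <| hsign.imp
    (fun h t ht => h t (Ioo_subset_Icc_self ht)) fun h t ht => h t (Ioo_subset_Icc_self ht)

/-- If `D(t,μ)` does not change sign on `[0,1]`, then
`|e^{-μ} - P(X=0)| ≤ ∫_0^1 |D(t,μ)| dt ≤ e^μ |e^{-μ} - P(X=0)|`. -/
theorem D_abs_integral_bounds (p : ℕ → ℝ) (hp : ∀ j, 0 ≤ p j)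
    (hsum : ∑' j, p j = 1) (hmean : Summable (fun j : ℕ => (j : ℝ) * p j))
    (μ : ℝ) (hμ : 0 < μ)
    (D : ℝ → ℝ)
    (hD : D = fun t => deriv (fun s : ℝ => ∑' j : ℕ, p j * s ^ j) t
      - μ * ∑' j : ℕ, p j * t ^ j)
    (hsign : (∀ t ∈ Set.Icc (0 : ℝ) 1, 0 ≤ D t) ∨ (∀ t ∈ Set.Icc (0 : ℝ) 1, D t ≤ 0)) :
    |Real.exp (-μ) - p 0| ≤ ∫ t in (0 : ℝ)..1, |D t| ∧
      ∫ t in (0 : ℝ)..1, |D t| ≤ Real.exp μ * |Real.exp (-μ) - p 0| :=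
  D_abs_integral_bounds_general p hsum hmean μ hμ D hD hsign
end

section
/- For any μ > 0 and natural number k, f_k(μ)(1 − f_k(μ)) − e^{−2μ} μ^{2k+1}/(k!)² ≥ 0, i.e. e^{−2μ} μ^{2k+1}/(k!)² ≤ f_k(μ)(1 − f_k(μ)), where f_k(μ) = e^{−μ}Σ_{j=0}^{k} μ^j/j!. -/
/-!
Let `X` be Poisson with mean `μ` and `p n = P(X = n)`; then the left-hand side is `μ p_k²` and
`f_k(μ) = P(X ≤ k)`. The recurrence `(n + 1) p (n + 1) = μ p n` telescopes to
`E[(X - μ) 1{X ≤ k}] = -μ p_k`, and Cauchy–Schwarz for the covariance of `1{X ≤ k}` and `X` gives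
`μ² p_k² ≤ Var(1{X ≤ k}) Var(X) = f_k (1 - f_k) μ`.
-/

open Real Finset
open scoped Nat

theorem HasSum.sq_le_mul_of_nonneg {ι : Type*} {w f g : ι → ℝ} {a b c : ℝ} (hw : ∀ i, 0 ≤ w i)
    (hf : HasSum (fun i ↦ f i ^ 2 * w i) a) (hg : HasSum (fun i ↦ g i ^ 2 * w i) b)
    (hfg : HasSum (fun i ↦ f i * g i * w i) c) : c ^ 2 ≤ a * b := by
  have hquad (x : ℝ) : 0 ≤ a * (x * x) + 2 * c * x + b := by
    have h : HasSum (fun i ↦ (x * f i + g i) ^ 2 * w i) (a * (x * x) + 2 * c * x + b) := by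
      rw [show a * (x * x) + 2 * c * x + b = x * x * a + 2 * x * c + b by ring]
      exact (((hf.mul_left (x * x)).add (hfg.mul_left (2 * x))).add hg).congr_fun fun i ↦ by ring
    exact h.nonneg fun i ↦ mul_nonneg (sq_nonneg _) (hw i)
  have hdisc := discrim_le_zero hquad
  rw [discrim] at hdisc
  linear_combination hdisc / 4

/-- `Cov(1_s, g)² ≤ Var(1_s) Var(g)` for a probability weight `w` and a centred `g`. -/
theorem sq_sum_mul_le_of_hasSum {ι : Type*} {w g : ι → ℝ} {V : ℝ} (s : Finset ι)
    (hw : ∀ i, 0 ≤ w i) (h1 : HasSum w 1) (hg : HasSum (fun i ↦ g i * w i) 0)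
    (hV : HasSum (fun i ↦ g i ^ 2 * w i) V) :
    (∑ i ∈ s, g i * w i) ^ 2 ≤ (∑ i ∈ s, w i) * (1 - ∑ i ∈ s, w i) * V := by
  classical
  set F := ∑ i ∈ s, w i
  have hind (u : ι → ℝ) : HasSum (fun i ↦ if i ∈ s then u i else 0) (∑ i ∈ s, u i) := by
    rw [← sum_congr rfl fun i hi ↦ if_pos hi]
    exact hasSum_sum_of_ne_finset_zero fun i hi ↦ if_neg hi
  refine HasSum.sq_le_mul_of_nonneg (f := fun i ↦ (if i ∈ s then 1 else 0) - F) hw ?_ hV ?_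
  · rw [show F * (1 - F) = (1 - 2 * F) * F + F ^ 2 * 1 by ring]
    exact (((hind w).mul_left (1 - 2 * F)).add (h1.mul_left (F ^ 2))).congr_fun fun i ↦ by
      split_ifs <;> ring
  · have h := (hind fun i ↦ g i * w i).sub (hg.mul_left F)
    rw [mul_zero, sub_zero] at h
    exact h.congr_fun fun i ↦ by split_ifs <;> ring

/-- The Poisson probabilities `Po(μ).real {n}`, for a real rate `μ`. -/
noncomputable def poissonWeight (μ : ℝ) (n : ℕ) : ℝ := exp (-μ) * μ ^ n / n !

theorem poissonWeight_nonneg {μ : ℝ} (hμ : 0 ≤ μ) (n : ℕ) : 0 ≤ poissonWeight μ n := by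
  unfold poissonWeight; positivity

section

variable (μ : ℝ)

theorem succ_mul_poissonWeight_succ (n : ℕ) :
    (n + 1) * poissonWeight μ (n + 1) = μ * poissonWeight μ n := by
  simp only [poissonWeight, Nat.factorial_succ, Nat.cast_mul, Nat.cast_succ, pow_succ]
  field_simp

theorem hasSum_poissonWeight : HasSum (poissonWeight μ) 1 := by
  have h := (NormedSpace.expSeries_div_hasSum_exp μ).mul_left (exp (-μ))
  rw [← exp_eq_exp_ℝ, ← exp_add, neg_add_cancel, exp_zero] at h
  refine h.congr_fun fun n ↦ ?_
  rw [poissonWeight, mul_div_assoc]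

/-- The Stein–Chen identity `E[X h(X)] = μ E[h(X + 1)]`. -/
theorem hasSum_natCast_mul_mul_poissonWeight {h : ℕ → ℝ} {a : ℝ}
    (hh : HasSum (fun n ↦ h (n + 1) * poissonWeight μ n) a) :
    HasSum (fun n ↦ n * h n * poissonWeight μ n) (μ * a) := by
  rw [← hasSum_nat_add_iff' 1]
  simp only [range_one, sum_singleton, CharP.cast_eq_zero, zero_mul, sub_zero]
  refine (hh.mul_left μ).congr_fun fun n ↦ ?_
  push_cast
  linear_combination h (n + 1) * succ_mul_poissonWeight_succ μ n

theorem hasSum_natCast_mul_poissonWeight : HasSum (fun n ↦ n * poissonWeight μ n) μ := by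
  have h := hasSum_natCast_mul_mul_poissonWeight μ (h := fun _ ↦ 1) (by simpa using hasSum_poissonWeight μ)
  simpa using h

theorem hasSum_sub_mul_poissonWeight : HasSum (fun n : ℕ ↦ ((n : ℝ) - μ) * poissonWeight μ n) 0 := by
  have h := (hasSum_natCast_mul_poissonWeight μ).sub ((hasSum_poissonWeight μ).mul_left μ)
  rw [mul_one, sub_self] at h
  exact h.congr_fun fun n ↦ by ring

theorem hasSum_sub_sq_mul_poissonWeight : HasSum (fun n : ℕ ↦ ((n : ℝ) - μ) ^ 2 * poissonWeight μ n) μ := by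
  have hshift : HasSum (fun n : ℕ ↦ ((n + 1 : ℕ) : ℝ) * poissonWeight μ n) (μ + 1) := by
    push_cast
    exact ((hasSum_natCast_mul_poissonWeight μ).add (hasSum_poissonWeight μ)).congr_fun fun n ↦ by ring
  have hsq := hasSum_natCast_mul_mul_poissonWeight μ hshift
  have h := (hsq.sub ((hasSum_natCast_mul_poissonWeight μ).mul_left (2 * μ))).add
    ((hasSum_poissonWeight μ).mul_left (μ ^ 2))
  rw [show μ * (μ + 1) - 2 * μ * μ + μ ^ 2 * 1 = μ by ring] at h
  exact h.congr_fun fun n ↦ by ring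

theorem sum_range_succ_sub_mul_poissonWeight (k : ℕ) :
    ∑ n ∈ range (k + 1), ((n : ℝ) - μ) * poissonWeight μ n = -μ * poissonWeight μ k := by
  induction k with
  | zero => simp
  | succ k ih =>
    rw [sum_range_succ, ih]
    push_cast
    linear_combination succ_mul_poissonWeight_succ μ k

end

theorem sigma_sq_nonneg (μ : ℝ) (hμ : 0 < μ) (k : ℕ) :
    Real.exp (-2 * μ) * μ ^ (2 * k + 1) / ((Nat.factorial k : ℝ)) ^ 2 ≤
      (Real.exp (-μ) * ∑ j ∈ Finset.range (k + 1), μ ^ j / (Nat.factorial j)) *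
        (1 - Real.exp (-μ) * ∑ j ∈ Finset.range (k + 1), μ ^ j / (Nat.factorial j)) := by
  have hcs := sq_sum_mul_le_of_hasSum (range (k + 1)) (poissonWeight_nonneg hμ.le)
    (hasSum_poissonWeight μ) (hasSum_sub_mul_poissonWeight μ) (hasSum_sub_sq_mul_poissonWeight μ)
  rw [sum_range_succ_sub_mul_poissonWeight] at hcs
  have hF : exp (-μ) * ∑ j ∈ range (k + 1), μ ^ j / j ! =
      ∑ j ∈ range (k + 1), poissonWeight μ j := by
    simp only [mul_sum, poissonWeight, mul_div_assoc]
  have hlhs : exp (-2 * μ) * μ ^ (2 * k + 1) / (k ! : ℝ) ^ 2 = μ * poissonWeight μ k ^ 2 := by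
    rw [poissonWeight, show -2 * μ = -μ + -μ by ring, exp_add]
    ring
  rw [hF, hlhs]
  refine le_of_mul_le_mul_left ?_ hμ
  linear_combination hcs
end
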